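/- For a 2n×2n scattering matrix with transmission block t ∈ Mₙ(ℂ), and a density matrix ρ with sorted eigenvalues λ↓(ρ), the set of achievable total transmissions {tr(UρU† t†t) : U ∈ U(n)} equals the closed interval [λ↓(ρ)·σ²↑(t), λ↓(ρ)·σ²↓(t)], where σ²↓(t) and σ²↑(t) are the squared singular values of t sorted nonincreasingly and nondecreasingly. -/

import Mathlib

/-!
Diagonalising `ρ = V diag(λ) V†` and `t†t = W diag(μ) W†` turns `tr(UρU† t†t)` into
`∑ i k, |G i k|² λ k μ i` with `G = W†UV` unitary, so the set of transmissions is the image of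
the unistochastic matrices `(|G i k|²)` under a linear functional. Unistochastic matrices are
doubly stochastic, hence convex combinations of permutation matrices (Birkhoff), and on a
permutation matrix the functional is a rearranged pairing of `λ` and `μ`, which the rearrangement
inequality bounds by the two sorted pairings. Conversely, for a permutation matrix `P` and
`Q = P S` with `S` a transposition, `√a P + i √b Q` is unitary with `|·|² = a P + b Q`, so the
image contains the segment between the values at `P` and `Q`; chaining transpositions connects
any two permutations, in particular the two extremal ones.
-/

open Matrix ComplexOrder

/-- `x` rearranged in nondecreasing order. -/
noncomputable def sortAsc {n : ℕ} (x : Fin n → ℝ) : Fin n → ℝ := x ∘ (Tuple.sort x)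

/-- `x` rearranged in nonincreasing order. -/
noncomputable def sortDesc {n : ℕ} (x : Fin n → ℝ) : Fin n → ℝ := fun i => sortAsc x i.rev

open Equiv Complex

section Rearrangement

variable {ι : Type*} [Fintype ι]

lemma sum_comp_mul_comp_eq_sum_comp_perm_mul (f g : ι → ℝ) (p q : Perm ι) :
    ∑ i, f (p i) * g (q i) = ∑ i, f ((p * q⁻¹) i) * g i := by
  rw [← Equiv.sum_comp q fun i => f ((p * q⁻¹) i) * g i]
  simp

lemma Monovary.sum_comp_perm_mul_le_sum_comp_mul_comp {f g : ι → ℝ} {p q : Perm ι}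
    (h : Monovary (f ∘ p) (g ∘ q)) (σ : Perm ι) :
    ∑ i, f (σ i) * g i ≤ ∑ i, f (p i) * g (q i) :=
  calc ∑ i, f (σ i) * g i = ∑ i, (f ∘ p) ((p⁻¹ * σ * q) i) * (g ∘ q) i := by
        rw [← Equiv.sum_comp q fun i => f (σ i) * g i]
        simp
    _ ≤ ∑ i, f (p i) * g (q i) := h.sum_comp_perm_mul_le_sum_mul

lemma Antivary.sum_comp_mul_comp_le_sum_comp_perm_mul {f g : ι → ℝ} {p q : Perm ι}
    (h : Antivary (f ∘ p) (g ∘ q)) (σ : Perm ι) :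
    ∑ i, f (p i) * g (q i) ≤ ∑ i, f (σ i) * g i :=
  calc ∑ i, f (p i) * g (q i) ≤ ∑ i, (f ∘ p) ((p⁻¹ * σ * q) i) * (g ∘ q) i :=
        h.sum_mul_le_sum_comp_perm_mul
    _ = ∑ i, f (σ i) * g i := by
        rw [← Equiv.sum_comp q fun i => f (σ i) * g i]
        simp

end Rearrangement

section Sorting

variable {n : ℕ}

-- `sortDesc x = x ∘ sortDescPerm x` and `sortAsc x = x ∘ Tuple.sort x` hold by `rfl`, which is
-- how the rearrangement lemmas above apply to the sorted tuples.
noncomputable def sortDescPerm (x : Fin n → ℝ) : Perm (Fin n) := Fin.revPerm.trans (Tuple.sort x)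

lemma antitone_sortDesc (x : Fin n → ℝ) : Antitone (sortDesc x) :=
  fun _ _ hij => Tuple.monotone_sort x (Fin.rev_le_rev.2 hij)

lemma sum_comp_perm_mul_le_sum_sortDesc_mul_sortDesc (d e : Fin n → ℝ) (σ : Perm (Fin n)) :
    ∑ i, d (σ i) * e i ≤ ∑ i, sortDesc d i * sortDesc e i :=
  Monovary.sum_comp_perm_mul_le_sum_comp_mul_comp (p := sortDescPerm d) (q := sortDescPerm e)
    ((antitone_sortDesc d).monovary (antitone_sortDesc e)) σ

lemma sum_sortDesc_mul_sortAsc_le_sum_comp_perm_mul (d e : Fin n → ℝ) (σ : Perm (Fin n)) :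
    ∑ i, sortDesc d i * sortAsc e i ≤ ∑ i, d (σ i) * e i :=
  Antivary.sum_comp_mul_comp_le_sum_comp_perm_mul (p := sortDescPerm d) (q := Tuple.sort e)
    ((antitone_sortDesc d).antivary (Tuple.monotone_sort e)) σ

end Sorting

lemma Equiv.Perm.uIcc_subset_of_uIcc_swap_mul_subset {α : Type*} [DecidableEq α] [Finite α]
    {g : Perm α → ℝ} {S : Set ℝ} (h1 : g 1 ∈ S)
    (hswap : ∀ σ x y, Set.uIcc (g σ) (g (Equiv.swap x y * σ)) ⊆ S) (σ τ : Perm α) :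
    Set.uIcc (g σ) (g τ) ⊆ S := by
  have from_one : ∀ σ, Set.uIcc (g 1) (g σ) ⊆ S := fun σ =>
    Equiv.Perm.swap_induction_on σ (by simpa using h1) fun σ x y _ ih =>
      Set.uIcc_subset_uIcc_union_uIcc.trans (Set.union_subset ih (hswap σ x y))
  exact Set.uIcc_subset_uIcc_union_uIcc.trans
    (Set.union_subset (Set.uIcc_comm (g σ) (g 1) ▸ from_one σ) (from_one τ))

namespace Matrix

def entrywiseNormSq {ι : Type*} (G : Matrix ι ι ℂ) : Matrix ι ι ℝ := of fun i k => normSq (G i k)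

section Fintype

variable {ι : Type*} [Fintype ι]

lemma isLinearMap_mulVec_dotProduct (d e : ι → ℝ) :
    IsLinearMap ℝ fun B : Matrix ι ι ℝ => (B *ᵥ d) ⬝ᵥ e where
  map_add B C := by rw [add_mulVec, add_dotProduct]
  map_smul c B := by rw [smul_mulVec, smul_dotProduct, smul_eq_mul]

lemma trace_mul_diagonal_mul_conjTranspose_mul_diagonal [DecidableEq ι] (G : Matrix ι ι ℂ)
    (d e : ι → ℝ) :
    (G * diagonal (RCLike.ofReal ∘ d) * Gᴴ * diagonal (RCLike.ofReal ∘ e)).trace =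
      (((entrywiseNormSq G *ᵥ d) ⬝ᵥ e : ℝ) : ℂ) := by
  simp only [trace, diag_apply, mul_diagonal]
  simp only [mul_apply (M := G * _), mul_diagonal, conjTranspose_apply, dotProduct, mulVec,
    entrywiseNormSq, of_apply, ofReal_sum, ofReal_mul, Finset.sum_mul, Function.comp_apply,
    RCLike.star_def, RCLike.ofReal_eq_complex_ofReal]
  refine Finset.sum_congr rfl fun i _ => Finset.sum_congr rfl fun k _ => ?_
  rw [normSq_eq_conj_mul_self]
  ring

lemma mulVec_dotProduct_mem_Icc_of_mem_doublyStochastic {n : ℕ} (d e : Fin n → ℝ)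
    {B : Matrix (Fin n) (Fin n) ℝ} (hB : B ∈ doublyStochastic ℝ (Fin n)) :
    (B *ᵥ d) ⬝ᵥ e ∈
      Set.Icc (∑ i, sortDesc d i * sortAsc e i) (∑ i, sortDesc d i * sortDesc e i) := by
  rw [← SetLike.mem_coe, doublyStochastic_eq_convexHull_permMatrix] at hB
  refine convexHull_min ?_ ((convex_Icc _ _).is_linear_preimage
    (isLinearMap_mulVec_dotProduct d e)) hB
  rintro _ ⟨σ, rfl⟩
  rw [Set.mem_preimage, permMatrix_mulVec]
  exact ⟨sum_sortDesc_mul_sortAsc_le_sum_comp_perm_mul d e σ,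
    sum_comp_perm_mul_le_sum_sortDesc_mul_sortDesc d e σ⟩

end Fintype

section DecidableEq

variable {ι : Type*} [DecidableEq ι]

lemma entrywiseNormSq_ofReal_smul_add_I_mul_smul_permMatrix (σ τ : Perm ι) (a b : ℝ) :
    entrywiseNormSq ((a : ℂ) • σ.permMatrix ℂ + (I * b) • τ.permMatrix ℂ) =
      a ^ 2 • σ.permMatrix ℝ + b ^ 2 • τ.permMatrix ℝ := by
  ext i k
  have h := normSq_add_mul_I (a * if σ i = k then 1 else 0) (b * if τ i = k then 1 else 0)
  simp only [entrywiseNormSq, of_apply, add_apply, smul_apply, PEquiv.toMatrix_apply,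
    toPEquiv_apply, Option.mem_some_iff, smul_eq_mul] at h ⊢
  split_ifs at h ⊢ <;> simp_all [mul_comm]

variable [Fintype ι]

variable (ι) in
def unistochastic : Set (Matrix ι ι ℝ) := entrywiseNormSq '' unitaryGroup ι ℂ

lemma entrywiseNormSq_mem_doublyStochastic {G : Matrix ι ι ℂ} (hG : G ∈ unitaryGroup ι ℂ) :
    entrywiseNormSq G ∈ doublyStochastic ℝ ι := by
  have hrow := congrFun₂ (mem_unitaryGroup_iff.mp hG)
  have hcol := congrFun₂ (mem_unitaryGroup_iff'.mp hG)
  refine mem_doublyStochastic_iff_sum.mpr ⟨fun i k => normSq_nonneg _, fun i => ?_, fun k => ?_⟩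
  · apply ofReal_injective
    simpa [mul_apply, entrywiseNormSq, mul_conj] using hrow i i
  · apply ofReal_injective
    simpa [mul_apply, entrywiseNormSq, mul_comm, mul_conj] using hcol k k

lemma unistochastic_subset_doublyStochastic : unistochastic ι ⊆ doublyStochastic ℝ ι := by
  rintro _ ⟨G, hG, rfl⟩
  exact entrywiseNormSq_mem_doublyStochastic hG

lemma permMatrix_mem_unitaryGroup (σ : Perm ι) : σ.permMatrix ℂ ∈ unitaryGroup ι ℂ := by
  rw [mem_unitaryGroup_iff', star_eq_conjTranspose, conjTranspose_permMatrix, ← permMatrix_mul,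
    mul_inv_cancel, permMatrix_one]

lemma ofReal_smul_add_I_mul_smul_mem_unitaryGroup {P Q : Matrix ι ι ℂ}
    (hP : P ∈ unitaryGroup ι ℂ) (hQ : Q ∈ unitaryGroup ι ℂ) (hPQ : (Pᴴ * Q).IsHermitian)
    {a b : ℝ} (hab : a ^ 2 + b ^ 2 = 1) :
    (a : ℂ) • P + (I * b) • Q ∈ unitaryGroup ι ℂ := by
  rw [mem_unitaryGroup_iff', star_eq_conjTranspose] at *
  have hQP : Qᴴ * P = Pᴴ * Q := by simpa using hPQ.eq
  simp only [conjTranspose_add, conjTranspose_smul, add_mul, mul_add, smul_mul_smul_comm, hP, hQ,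
    hQP, star_mul', conj_ofReal, RCLike.star_def, conj_I]
  have hab' : (a : ℂ) * a + -I * b * (I * b) = 1 := by
    have hab : (a : ℂ) ^ 2 + (b : ℂ) ^ 2 = 1 := by exact_mod_cast hab
    linear_combination hab - (b : ℂ) ^ 2 * I_sq
  linear_combination (norm := module) hab' • (1 : Matrix ι ι ℂ)

lemma permMatrix_mem_unistochastic (σ : Perm ι) : σ.permMatrix ℝ ∈ unistochastic ι :=
  ⟨σ.permMatrix ℂ, permMatrix_mem_unitaryGroup σ, by
    simpa using entrywiseNormSq_ofReal_smul_add_I_mul_smul_permMatrix σ σ 1 0⟩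

lemma segment_permMatrix_swap_mul_subset_unistochastic (σ : Perm ι) (x y : ι) :
    segment ℝ (σ.permMatrix ℝ) ((Equiv.swap x y * σ).permMatrix ℝ) ⊆ unistochastic ι := by
  rintro _ ⟨a, b, ha, hb, hab, rfl⟩
  refine ⟨(√a : ℂ) • σ.permMatrix ℂ + (I * √b) • (Equiv.swap x y * σ).permMatrix ℂ, ?_, ?_⟩
  · refine ofReal_smul_add_I_mul_smul_mem_unitaryGroup (permMatrix_mem_unitaryGroup σ)
      (permMatrix_mem_unitaryGroup _) ?_ (by simpa [ha, hb] using hab)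
    rw [conjTranspose_permMatrix, ← permMatrix_mul, mul_inv_cancel_right]
    simp [IsHermitian, swap_inv]
  · rw [entrywiseNormSq_ofReal_smul_add_I_mul_smul_permMatrix, Real.sq_sqrt ha, Real.sq_sqrt hb]

lemma uIcc_permMatrix_mulVec_dotProduct_subset_image_unistochastic (d e : ι → ℝ)
    (σ τ : Perm ι) :
    Set.uIcc ((σ.permMatrix ℝ *ᵥ d) ⬝ᵥ e) ((τ.permMatrix ℝ *ᵥ d) ⬝ᵥ e) ⊆
      (fun B => (B *ᵥ d) ⬝ᵥ e) '' unistochastic ι := by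
  refine Perm.uIcc_subset_of_uIcc_swap_mul_subset (g := fun σ => (σ.permMatrix ℝ *ᵥ d) ⬝ᵥ e)
    ?_ (fun σ x y => ?_) σ τ
  · exact ⟨_, permMatrix_mem_unistochastic 1, rfl⟩
  rw [← segment_eq_uIcc]
  exact (image_segment ℝ (IsLinearMap.mk' _ (isLinearMap_mulVec_dotProduct d e)).toAffineMap
    _ _).symm.subset.trans (Set.image_mono (segment_permMatrix_swap_mul_subset_unistochastic σ x y))

lemma IsHermitian.re_trace_mul_mul_conjTranspose_mul_eq {A B : Matrix ι ι ℂ}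
    (hA : A.IsHermitian) (hB : B.IsHermitian) (U : Matrix ι ι ℂ) :
    ((U * A * Uᴴ * B).trace).re =
      (entrywiseNormSq ((hB.eigenvectorUnitary : Matrix ι ι ℂ)ᴴ * U *
        (hA.eigenvectorUnitary : Matrix ι ι ℂ)) *ᵥ hA.eigenvalues) ⬝ᵥ hB.eigenvalues := by
  set V : Matrix ι ι ℂ := ↑hA.eigenvectorUnitary
  set W : Matrix ι ι ℂ := ↑hB.eigenvectorUnitary
  set DA : Matrix ι ι ℂ := diagonal (RCLike.ofReal ∘ hA.eigenvalues)
  set DB : Matrix ι ι ℂ := diagonal (RCLike.ofReal ∘ hB.eigenvalues)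
  have hA' : A = V * DA * Vᴴ := hA.spectral_theorem
  have hB' : B = W * DB * Wᴴ := hB.spectral_theorem
  rw [← ofReal_re ((entrywiseNormSq (Wᴴ * U * V) *ᵥ hA.eigenvalues) ⬝ᵥ hB.eigenvalues),
    ← trace_mul_diagonal_mul_conjTranspose_mul_diagonal]
  congr 1
  calc (U * A * Uᴴ * B).trace = ((U * V * DA * Vᴴ * Uᴴ * W * DB) * Wᴴ).trace := by
        simp only [hA', hB', mul_assoc]
    _ = (Wᴴ * (U * V * DA * Vᴴ * Uᴴ * W * DB)).trace := trace_mul_comm _ _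
    _ = (Wᴴ * U * V * DA * (Wᴴ * U * V)ᴴ * DB).trace := by
        simp only [conjTranspose_mul, conjTranspose_conjTranspose, mul_assoc]

lemma IsHermitian.setOf_re_trace_unitary_conj_mul_eq_image {A B : Matrix ι ι ℂ}
    (hA : A.IsHermitian) (hB : B.IsHermitian) :
    {r : ℝ | ∃ U ∈ unitaryGroup ι ℂ, r = ((U * A * Uᴴ * B).trace).re} =
      (fun M => (M *ᵥ hA.eigenvalues) ⬝ᵥ hB.eigenvalues) '' unistochastic ι := by
  set V : Matrix ι ι ℂ := ↑hA.eigenvectorUnitary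
  set W : Matrix ι ι ℂ := ↑hB.eigenvectorUnitary
  have hV : V ∈ unitaryGroup ι ℂ := hA.eigenvectorUnitary.2
  have hW : W ∈ unitaryGroup ι ℂ := hB.eigenvectorUnitary.2
  ext r
  constructor
  · rintro ⟨U, hU, rfl⟩
    exact ⟨_, ⟨Wᴴ * U * V, mul_mem (mul_mem (Unitary.star_mem hW) hU) hV, rfl⟩,
      (hA.re_trace_mul_mul_conjTranspose_mul_eq hB U).symm⟩
  · rintro ⟨_, ⟨G, hG, rfl⟩, rfl⟩
    refine ⟨W * G * Vᴴ, mul_mem (mul_mem hW hG) (Unitary.star_mem hV), ?_⟩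
    have hWW : Wᴴ * W = 1 := mem_unitaryGroup_iff'.mp hW
    have hVV : Vᴴ * V = 1 := mem_unitaryGroup_iff'.mp hV
    rw [hA.re_trace_mul_mul_conjTranspose_mul_eq hB,
      show Wᴴ * (W * G * Vᴴ) * V = Wᴴ * W * G * (Vᴴ * V) by simp only [mul_assoc], hWW, hVV,
      one_mul, mul_one]

end DecidableEq

theorem image_unistochastic_eq_Icc {n : ℕ} (d e : Fin n → ℝ) :
    (fun B => (B *ᵥ d) ⬝ᵥ e) '' unistochastic (Fin n) =
      Set.Icc (∑ i, sortDesc d i * sortAsc e i) (∑ i, sortDesc d i * sortDesc e i) := by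
  refine subset_antisymm (Set.image_subset_iff.2 fun B hB =>
    mulVec_dotProduct_mem_Icc_of_mem_doublyStochastic d e
      (unistochastic_subset_doublyStochastic hB)) ?_
  have hlo : ∑ i, sortDesc d i * sortAsc e i =
      ((sortDescPerm d * (Tuple.sort e)⁻¹).permMatrix ℝ *ᵥ d) ⬝ᵥ e := by
    rw [permMatrix_mulVec]
    exact sum_comp_mul_comp_eq_sum_comp_perm_mul d e (sortDescPerm d) (Tuple.sort e)
  have hhi : ∑ i, sortDesc d i * sortDesc e i =
      ((sortDescPerm d * (sortDescPerm e)⁻¹).permMatrix ℝ *ᵥ d) ⬝ᵥ e := by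
    rw [permMatrix_mulVec]
    exact sum_comp_mul_comp_eq_sum_comp_perm_mul d e (sortDescPerm d) (sortDescPerm e)
  rw [hlo, hhi]
  exact Set.Icc_subset_uIcc.trans
    (uIcc_permMatrix_mulVec_dotProduct_subset_image_unistochastic d e _ _)

end Matrix

theorem transmission_unitary_orbit_eq_Icc_general {n : ℕ} (ρ t : Matrix (Fin n) (Fin n) ℂ)
    (hρ : ρ.PosSemidef) :
    {r : ℝ | ∃ U ∈ Matrix.unitaryGroup (Fin n) ℂ, r = ((U * ρ * Uᴴ * (tᴴ * t)).trace).re} =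
      Set.Icc
        (∑ i, sortDesc hρ.1.eigenvalues i *
          sortAsc (Matrix.posSemidef_conjTranspose_mul_self t).1.eigenvalues i)
        (∑ i, sortDesc hρ.1.eigenvalues i *
          sortDesc (Matrix.posSemidef_conjTranspose_mul_self t).1.eigenvalues i) := by
  rw [hρ.1.setOf_re_trace_unitary_conj_mul_eq_image (posSemidef_conjTranspose_mul_self t).1]
  exact image_unistochastic_eq_Icc _ _

/-- The achievable total transmissions `tr(UρU† t†t)` over all unitaries `U` form the closed
interval `[λ↓(ρ)·σ²↑(t), λ↓(ρ)·σ²↓(t)]`, where the squared singular values of `t` are the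
eigenvalues of the Hermitian PSD matrix `t†t`. -/
theorem transmission_unitary_orbit_eq_Icc {n : ℕ} (ρ t : Matrix (Fin n) (Fin n) ℂ)
    (hρ : ρ.PosSemidef) (htr : ρ.trace = 1) :
    {r : ℝ | ∃ U ∈ Matrix.unitaryGroup (Fin n) ℂ, r = ((U * ρ * Uᴴ * (tᴴ * t)).trace).re} =
      Set.Icc
        (∑ i, sortDesc hρ.1.eigenvalues i *
          sortAsc (Matrix.posSemidef_conjTranspose_mul_self t).1.eigenvalues i)
        (∑ i, sortDesc hρ.1.eigenvalues i *
          sortDesc (Matrix.posSemidef_conjTranspose_mul_self t).1.eigenvalues i) :=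
  transmission_unitary_orbit_eq_Icc_general ρ t hρ
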